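/- arXiv:2006.06572 — 2 statements merged into one kernel-verified Lean document; each statement's English description precedes it below -/
import Mathlib

section
/- Let $p$ be a prime, let $j \ge 2$, with $p \nmid a$, and suppose $p \mid h_1$ while $p \nmid \gcd(h_1, h_2, h_3)$. Then $F(h_1, h_2, h_3; a; p^j) := \sum_{\substack{b_1, b_2, b_3 \in (\mathbb{Z}/p^j\mathbb{Z})^\times \\ b_1 b_2 b_3 = a}} e\!\left(\frac{h_1 b_1 + h_2 b_2 + h_3 b_3}{p^j}\right) = 0$. -/
open scoped Classical


/-- The complete exponential sum
`F(h₁,h₂,h₃;a;q) = ∑_{b₁b₂b₃ ≡ a (mod q), bᵢ ∈ (ℤ/q)ˣ} e((h₁b₁+h₂b₂+h₃b₃)/q)`,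
with the units `bᵢ` represented by their residues in `{0, …, q-1}` coprime
to `q`. -/
noncomputable def F (h1 h2 h3 a : ℤ) (q : ℕ) : ℂ :=
  ∑ b ∈ ((Finset.range q) ×ˢ (Finset.range q) ×ˢ (Finset.range q)).filter
      (fun b : ℕ × ℕ × ℕ => Nat.Coprime b.1 q ∧ Nat.Coprime b.2.1 q ∧
        Nat.Coprime b.2.2 q ∧
        ((b.1 * b.2.1 * b.2.2 : ℕ) : ℤ) ≡ a [ZMOD (q : ℤ)]),
    Complex.exp (2 * Real.pi * Complex.I *
      (((h1 * b.1 + h2 * b.2.1 + h3 * b.2.2 : ℤ) : ℂ) / (q : ℂ)))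

/-- The same sum, over triples of units of `ZMod q`. -/
noncomputable def G (h1 h2 h3 a : ℤ) (q : ℕ) [NeZero q] : ℂ :=
  ∑ u ∈ Finset.univ.filter
      (fun u : (ZMod q)ˣ × (ZMod q)ˣ × (ZMod q)ˣ =>
        (u.1 : ZMod q) * (u.2.1 : ZMod q) * (u.2.2 : ZMod q) = (a : ZMod q)),
    ZMod.stdAddChar ((h1 : ZMod q) * (u.1 : ZMod q) + (h2 : ZMod q) * (u.2.1 : ZMod q)
      + (h3 : ZMod q) * (u.2.2 : ZMod q))

lemma F_eq_G (h1 h2 h3 a : ℤ) (q : ℕ) [NeZero q] : F h1 h2 h3 a q = G h1 h2 h3 a q := by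
  classical
  unfold F G
  refine Finset.sum_bij'
    (i := fun b hb => ?_) (j := fun u hu => ?_) ?_ ?_ ?_ ?_ ?_
  · -- i
    simp only [Finset.mem_filter, Finset.mem_product, Finset.mem_range] at hb
    exact (ZMod.unitOfCoprime b.1 hb.2.1, ZMod.unitOfCoprime b.2.1 hb.2.2.1,
      ZMod.unitOfCoprime b.2.2 hb.2.2.2.1)
  · -- j
    exact (((u.1 : ZMod q)).val, ((u.2.1 : ZMod q)).val, ((u.2.2 : ZMod q)).val)
  · -- hi
    intro b hb
    simp only [Finset.mem_filter, Finset.mem_product, Finset.mem_range] at hb ⊢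
    obtain ⟨⟨l1, l2, l3⟩, c1, c2, c3, hcong⟩ := hb
    refine ⟨Finset.mem_univ _, ?_⟩
    simp only [ZMod.coe_unitOfCoprime]
    have := (ZMod.intCast_eq_intCast_iff _ _ _).mpr hcong
    push_cast at this ⊢
    exact this
  · -- hj
    intro u hu
    simp only [Finset.mem_filter, Finset.mem_product, Finset.mem_range] at hu ⊢
    refine ⟨⟨ZMod.val_lt _, ZMod.val_lt _, ZMod.val_lt _⟩,
      ZMod.val_coe_unit_coprime _, ZMod.val_coe_unit_coprime _,
      ZMod.val_coe_unit_coprime _, ?_⟩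
    rw [← ZMod.intCast_eq_intCast_iff]
    push_cast
    simp only [ZMod.natCast_val, ZMod.cast_id]
    exact hu.2
  · -- left_inv
    intro b hb
    simp only [Finset.mem_filter, Finset.mem_product, Finset.mem_range] at hb
    obtain ⟨⟨l1, l2, l3⟩, -⟩ := hb
    simp only [ZMod.coe_unitOfCoprime]
    rw [ZMod.val_natCast_of_lt l1, ZMod.val_natCast_of_lt l2, ZMod.val_natCast_of_lt l3]
  · -- right_inv
    intro u hu
    ext <;> simp [ZMod.coe_unitOfCoprime, ZMod.natCast_val, ZMod.cast_id]
  · -- summand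
    intro b hb
    simp only [ZMod.coe_unitOfCoprime]
    rw [← mul_div_assoc, ← ZMod.stdAddChar_coe (N := q)]
    congr 1
    push_cast
    ring

lemma G_symm (h1 h2 h3 a : ℤ) (q : ℕ) [NeZero q] : G h1 h2 h3 a q = G h1 h3 h2 a q := by
  classical
  unfold G
  refine Finset.sum_nbij' (i := fun u => (u.1, u.2.2, u.2.1)) (j := fun u => (u.1, u.2.2, u.2.1))
    ?_ ?_ ?_ ?_ ?_ <;> intro u hu <;>
    simp only [Finset.mem_filter, Finset.mem_univ, true_and] at hu ⊢ <;>
    first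
      | rfl
      | (rw [← hu]; ring)
      | (congr 1; ring)

lemma G_core (p : ℕ) (hp : p.Prime) (j : ℕ) (hj : 2 ≤ j) (h1 h2 h3 a : ℤ)
    (hh1 : (p : ℤ) ∣ h1) (hh2 : ¬ (p : ℤ) ∣ h2) [NeZero (p ^ j)] :
    G h1 h2 h3 a (p ^ j) = 0 := by
  classical
  set q : ℕ := p ^ j with hq
  set x : ZMod q := (p : ZMod q) ^ (j - 1) with hxdef
  have hpj : (p : ZMod q) ^ j = 0 := by
    have : ((p ^ j : ℕ) : ZMod q) = 0 := by rw [← hq]; exact ZMod.natCast_self q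
    push_cast at this; exact this
  have hx2 : x * x = 0 := by
    rw [hxdef, ← pow_add]
    have h : (j - 1) + (j - 1) = j + (j - 2) := by omega
    rw [h, pow_add, hpj, zero_mul]
  have hpx : (p : ZMod q) * x = 0 := by
    rw [hxdef, ← pow_succ']
    have h : j - 1 + 1 = j := by omega
    rw [h, hpj]
  have hh1x : (h1 : ZMod q) * x = 0 := by
    obtain ⟨c, hc⟩ := hh1
    have : (h1 : ZMod q) = (p : ZMod q) * (c : ZMod q) := by
      rw [hc]; push_cast; ring
    rw [this, mul_assoc, mul_comm (c : ZMod q) x, ← mul_assoc, hpx, zero_mul]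
  -- the units 1 + x t
  have hut : ∀ t : ℕ, (1 + x * t) * (1 - x * t) = 1 := by
    intro t
    have : (1 + x * t) * (1 - x * t) = 1 - (x * x) * (t * t) := by ring
    rw [this, hx2, zero_mul, sub_zero]
  let ut : ℕ → (ZMod q)ˣ := fun t =>
    ⟨1 + x * t, 1 - x * t, hut t, by rw [mul_comm] at *; exact hut t⟩
  -- key identity
  set S := Finset.univ.filter
      (fun u : (ZMod q)ˣ × (ZMod q)ˣ × (ZMod q)ˣ =>
        (u.1 : ZMod q) * (u.2.1 : ZMod q) * (u.2.2 : ZMod q) = (a : ZMod q)) with hS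
  set ψ : AddChar (ZMod q) ℂ := ZMod.stdAddChar with hψ
  set arg : (ZMod q)ˣ × (ZMod q)ˣ × (ZMod q)ˣ → ZMod q := fun u =>
    (h1 : ZMod q) * (u.1 : ZMod q) + (h2 : ZMod q) * (u.2.1 : ZMod q)
      + (h3 : ZMod q) * (u.2.2 : ZMod q) with harg
  have key : ∀ t : ℕ, G h1 h2 h3 a q
      = ∑ u ∈ S, ψ (arg u) * (ψ (x * ((h2 : ZMod q) * (u.2.1 : ZMod q)))) ^ t := by
    intro t
    have hstep : ∀ u ∈ S,
        ψ (arg u) * (ψ (x * ((h2 : ZMod q) * (u.2.1 : ZMod q)))) ^ t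
          = ψ (arg (u.1 * (ut t)⁻¹, u.2.1 * ut t, u.2.2)) := by
      intro u _
      have hcoe : ((u.1 * (ut t)⁻¹ : (ZMod q)ˣ) : ZMod q) = (u.1 : ZMod q) * (1 - x * t) := rfl
      have hcoe2 : ((u.2.1 * ut t : (ZMod q)ˣ) : ZMod q) = (u.2.1 : ZMod q) * (1 + x * t) := rfl
      have hargeq : arg (u.1 * (ut t)⁻¹, u.2.1 * ut t, u.2.2)
          = arg u + (t : ℕ) • (x * ((h2 : ZMod q) * (u.2.1 : ZMod q))) := by
        simp only [harg, hcoe, hcoe2, nsmul_eq_mul]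
        have expand : (h1 : ZMod q) * ((u.1 : ZMod q) * (1 - x * t))
            + (h2 : ZMod q) * ((u.2.1 : ZMod q) * (1 + x * t))
            + (h3 : ZMod q) * (u.2.2 : ZMod q)
            = ((h1 : ZMod q) * (u.1 : ZMod q) + (h2 : ZMod q) * (u.2.1 : ZMod q)
              + (h3 : ZMod q) * (u.2.2 : ZMod q))
              + (t : ZMod q) * (x * ((h2 : ZMod q) * (u.2.1 : ZMod q)))
              - ((h1 : ZMod q) * x) * ((u.1 : ZMod q) * t) := by ring
        rw [expand, hh1x, zero_mul, sub_zero]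
      rw [hargeq, AddChar.map_add_eq_mul ψ (arg u)
        ((t : ℕ) • (x * ((h2 : ZMod q) * (u.2.1 : ZMod q)))), AddChar.map_nsmul_eq_pow]
    rw [Finset.sum_congr rfl hstep]
    unfold G
    rw [← hS]
    refine (Finset.sum_nbij' (i := fun u => (u.1 * (ut t)⁻¹, u.2.1 * ut t, u.2.2))
      (j := fun u => (u.1 * ut t, u.2.1 * (ut t)⁻¹, u.2.2)) ?_ ?_ ?_ ?_ ?_).symm <;>
      intro u hu <;>
      simp only [hS, Finset.mem_filter, Finset.mem_univ, true_and, Units.val_mul] at hu ⊢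
    · rw [← hu]
      have : ((((ut t)⁻¹ : (ZMod q)ˣ)) : ZMod q) * ((ut t : (ZMod q)ˣ) : ZMod q) = 1 :=
        by rw [← Units.val_mul, inv_mul_cancel, Units.val_one]
      calc (u.1 : ZMod q) * ((((ut t)⁻¹ : (ZMod q)ˣ)) : ZMod q) * ((u.2.1 : ZMod q)
            * ((ut t : (ZMod q)ˣ) : ZMod q)) * (u.2.2 : ZMod q)
          = (u.1 : ZMod q) * (u.2.1 : ZMod q) * (u.2.2 : ZMod q)
            * (((((ut t)⁻¹ : (ZMod q)ˣ)) : ZMod q) * ((ut t : (ZMod q)ˣ) : ZMod q)) := by ring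
        _ = _ := by rw [this, mul_one]
    · rw [← hu]
      have : ((ut t : (ZMod q)ˣ) : ZMod q) * ((((ut t)⁻¹ : (ZMod q)ˣ)) : ZMod q) = 1 :=
        by rw [← Units.val_mul, mul_inv_cancel, Units.val_one]
      calc (u.1 : ZMod q) * ((ut t : (ZMod q)ˣ) : ZMod q) * ((u.2.1 : ZMod q)
            * ((((ut t)⁻¹ : (ZMod q)ˣ)) : ZMod q)) * (u.2.2 : ZMod q)
          = (u.1 : ZMod q) * (u.2.1 : ZMod q) * (u.2.2 : ZMod q)
            * (((ut t : (ZMod q)ˣ) : ZMod q) * ((((ut t)⁻¹ : (ZMod q)ˣ)) : ZMod q)) := by ring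
        _ = _ := by rw [this, mul_one]
    · ext <;> simp [mul_assoc]
    · ext <;> simp [mul_assoc]
    · rfl
  -- the inner geometric sum vanishes
  have hz : ∀ u ∈ S, ∑ t ∈ Finset.range p, (ψ (x * ((h2 : ZMod q) * (u.2.1 : ZMod q)))) ^ t = 0 := by
    intro u _
    set z : ℂ := ψ (x * ((h2 : ZMod q) * (u.2.1 : ZMod q))) with hz
    have hzp : z ^ p = 1 := by
      rw [hz, ← AddChar.map_nsmul_eq_pow, nsmul_eq_mul]
      have : (p : ZMod q) * (x * ((h2 : ZMod q) * (u.2.1 : ZMod q)))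
          = ((p : ZMod q) * x) * ((h2 : ZMod q) * (u.2.1 : ZMod q)) := by ring
      rw [this, hpx, zero_mul, AddChar.map_zero_eq_one]
    have hzne : z ≠ 1 := by
      intro hz1
      have hinj : x * ((h2 : ZMod q) * (u.2.1 : ZMod q)) = 0 := by
        have := ZMod.injective_stdAddChar (N := q)
        have h0 : ψ (x * ((h2 : ZMod q) * (u.2.1 : ZMod q))) = ψ 0 := by
          rw [AddChar.map_zero_eq_one]; exact hz1
        exact this h0
      have hxh2 : x * (h2 : ZMod q) = 0 := by
        have := congrArg (fun y => y * ((u.2.1⁻¹ : (ZMod q)ˣ) : ZMod q)) hinj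
        simp only [zero_mul] at this
        calc x * (h2 : ZMod q)
            = x * ((h2 : ZMod q) * (u.2.1 : ZMod q)) * ((u.2.1⁻¹ : (ZMod q)ˣ) : ZMod q) := by
              have h1 : (u.2.1 : ZMod q) * ((u.2.1⁻¹ : (ZMod q)ˣ) : ZMod q) = 1 := by
                rw [← Units.val_mul, mul_inv_cancel, Units.val_one]
              calc x * (h2 : ZMod q) = x * (h2 : ZMod q) * ((u.2.1 : ZMod q)
                    * ((u.2.1⁻¹ : (ZMod q)ˣ) : ZMod q)) := by rw [h1, mul_one]
                _ = _ := by ring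
          _ = 0 := this
      have : ((((p : ℤ) ^ (j - 1) * h2) : ℤ) : ZMod q) = 0 := by
        push_cast
        rw [← hxdef] at *
        convert hxh2 using 2
      rw [ZMod.intCast_zmod_eq_zero_iff_dvd] at this
      have hcast : ((q : ℕ) : ℤ) = (p : ℤ) ^ (j - 1) * (p : ℤ) := by
        rw [hq]; push_cast
        rw [← pow_succ]
        congr 1
        omega
      rw [hcast] at this
      have := (mul_dvd_mul_iff_left (a := (p : ℤ) ^ (j - 1))
        (pow_ne_zero _ (by exact_mod_cast hp.ne_zero))).mp this
      exact hh2 this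
    have := geom_sum_eq hzne p
    rw [this, hzp, sub_self, zero_div]
  -- average over t
  have havg : (p : ℂ) * G h1 h2 h3 a q = 0 := by
    calc (p : ℂ) * G h1 h2 h3 a q
        = ∑ _t ∈ Finset.range p, G h1 h2 h3 a q := by
          rw [Finset.sum_const, Finset.card_range, nsmul_eq_mul]
      _ = ∑ t ∈ Finset.range p, ∑ u ∈ S,
            ψ (arg u) * (ψ (x * ((h2 : ZMod q) * (u.2.1 : ZMod q)))) ^ t := by
          exact Finset.sum_congr rfl (fun t _ => key t)
      _ = ∑ u ∈ S, ψ (arg u) * ∑ t ∈ Finset.range p,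
            (ψ (x * ((h2 : ZMod q) * (u.2.1 : ZMod q)))) ^ t := by
          rw [Finset.sum_comm]
          exact Finset.sum_congr rfl (fun u _ => by rw [Finset.mul_sum])
      _ = 0 := by
          refine Finset.sum_eq_zero (fun u hu => ?_)
          rw [hz u hu, mul_zero]
  have hpne : (p : ℂ) ≠ 0 := by exact_mod_cast hp.ne_zero
  exact (mul_eq_zero.mp havg).resolve_left hpne

/-- Vanishing of `F` modulo higher prime powers: if `j ≥ 2`, `p ∤ a`,
`p ∣ h₁` and `p` does not divide all of `h₁, h₂, h₃`, then
`F(h₁,h₂,h₃;a;p^j) = 0`. -/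
theorem stmt_14 (p : ℕ) (hp : p.Prime) (j : ℕ) (hj : 2 ≤ j) (h1 h2 h3 a : ℤ)
    (ha : ¬ (p : ℤ) ∣ a) (hh1 : (p : ℤ) ∣ h1)
    (hnall : ¬ ((p : ℤ) ∣ h1 ∧ (p : ℤ) ∣ h2 ∧ (p : ℤ) ∣ h3)) :
    F h1 h2 h3 a (p ^ j) = 0 := by
  haveI : NeZero (p ^ j) := ⟨pow_ne_zero _ hp.ne_zero⟩
  rw [F_eq_G]
  by_cases hh2 : (p : ℤ) ∣ h2
  · have hh3 : ¬ (p : ℤ) ∣ h3 := fun hh3 => hnall ⟨hh1, hh2, hh3⟩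
    rw [G_symm]
    exact G_core p hp j hj h1 h3 h2 a hh1 hh3
  · exact G_core p hp j hj h1 h2 h3 a hh1 hh2
end

section
/- With $F(h_1, h_2, h_3; a; q) := \sum_{\substack{b_1, b_2, b_3 \in (\mathbb{Z}/q\mathbb{Z})^\times \\ b_1 b_2 b_3 = a}} e\!\left(\frac{h_1 b_1 + h_2 b_2 + h_3 b_3}{q}\right)$: if $\gcd(a, q) = 1$ and $d := \gcd(h_1, h_2, h_3, q)$, then $F(h_1, h_2, h_3; a; q) = \frac{\varphi(q)^2}{\varphi(q/d)^2}\, F\!\left(\frac{h_1}{d}, \frac{h_2}{d}, \frac{h_3}{d}; a; \frac{q}{d}\right)$. -/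
open scoped Classical

open Finset

private lemma cop_mod {x n : ℕ} (h : Nat.Coprime x n) : Nat.Coprime (x % n) n := by
  rw [Nat.Coprime, ← Nat.gcd_rec]
  exact Nat.coprime_comm.mp h

private lemma exp_congr {m : ℕ} (hm : 0 < m) {s t : ℤ} (h : s ≡ t [ZMOD (m:ℤ)]) :
    Complex.exp (2 * Real.pi * Complex.I * ((s : ℂ) / (m : ℂ))) =
    Complex.exp (2 * Real.pi * Complex.I * ((t : ℂ) / (m : ℂ))) := by
  have hm' : (m:ℂ) ≠ 0 := by exact_mod_cast hm.ne'
  obtain ⟨k, hk⟩ := h.dvd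
  have ht : (t:ℂ) = (s:ℂ) + (m:ℂ) * (k:ℂ) := by
    have : t = s + m * k := by linarith
    exact_mod_cast congrArg (Int.cast : ℤ → ℂ) this
  have key : 2 * (Real.pi:ℂ) * Complex.I * ((t:ℂ)/(m:ℂ)) =
      2 * (Real.pi:ℂ) * Complex.I * ((s:ℂ)/(m:ℂ)) + (k:ℂ) * (2 * (Real.pi:ℂ) * Complex.I) := by
    rw [ht]; field_simp
  rw [key, Complex.exp_add, Complex.exp_int_mul_two_pi_mul_I, mul_one]

private lemma modred (m : ℕ) (x : ℕ) : ((x % m : ℕ) : ℤ) ≡ (x : ℤ) [ZMOD (m:ℤ)] := by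
  show _ % _ = _ % _
  push_cast
  exact Int.emod_emod_of_dvd _ dvd_rfl

private lemma val_mod (q m : ℕ) [NeZero q] [NeZero m] (hmq : m ∣ q) (t : ZMod q) :
    t.val % m = (ZMod.castHom hmq (ZMod m) t).val := by
  rw [ZMod.castHom_apply, ← ZMod.natCast_val, ZMod.val_natCast]

private lemma natCast_val_self (q : ℕ) [NeZero q] (t : ZMod q) :
    ((t.val : ℕ) : ZMod q) = t := by
  rw [ZMod.natCast_val, ZMod.cast_id]

private lemma castHom_inv (q m : ℕ) (hmq : m ∣ q) (t : ZMod q) (ht : IsUnit t) :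
    (ZMod.castHom hmq (ZMod m)) t⁻¹ = ((ZMod.castHom hmq (ZMod m)) t)⁻¹ := by
  symm
  apply ZMod.inv_eq_of_mul_eq_one
  rw [← map_mul, ZMod.mul_inv_of_unit t ht, map_one]

private lemma modeq_iff (q : ℕ) (n : ℕ) (a : ℤ) :
    (((n : ℕ) : ℤ) ≡ a [ZMOD (q:ℤ)]) ↔ ((n : ZMod q) = (a : ZMod q)) := by
  rw [← ZMod.intCast_eq_intCast_iff, Int.cast_natCast]

private lemma isUnit_int_cast (q : ℕ) (a : ℤ) (ha : Int.gcd a (q:ℤ) = 1) :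
    IsUnit (a : ZMod q) := by
  have hgcd : Nat.Coprime a.natAbs q := by simpa [Int.gcd] using ha
  have hu : IsUnit ((a.natAbs : ℕ) : ZMod q) := (ZMod.isUnit_iff_coprime _ _).mpr hgcd
  rcases Int.natAbs_eq a with h | h
  · rw [h, Int.cast_natCast]; exact hu
  · rw [h, Int.cast_neg, Int.cast_natCast]; exact hu.neg

private lemma Tcard_eq (q m : ℕ) (hq : 0 < q) (hm0 : 0 < m) (hmq : m ∣ q)
    {c c' : ℕ} (hc : c < m) (hcop : Nat.Coprime c m) (hc' : c' < m) (hcop' : Nat.Coprime c' m) :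
    ((Finset.range q).filter fun x => Nat.Coprime x q ∧ x % m = c).card
      = ((Finset.range q).filter fun x => Nat.Coprime x q ∧ x % m = c').card := by
  haveI := NeZero.of_pos hq
  haveI := NeZero.of_pos hm0
  have main : ∀ (v : (ZMod q)ˣ) (c₁ c₂ : ℕ), c₂ < m →
      (ZMod.castHom hmq (ZMod m)) ↑v * (c₁ : ZMod m) = (c₂ : ZMod m) →
      ∀ x ∈ (range q).filter fun x => Nat.Coprime x q ∧ x % m = c₁,
        ((↑v * (x : ZMod q)).val) ∈ (range q).filter fun x => Nat.Coprime x q ∧ x % m = c₂ := by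
    intro v c₁ c₂ h₂ hv x hx
    simp only [mem_filter, mem_range] at hx ⊢
    obtain ⟨hxq, hxcop, hxm⟩ := hx
    refine ⟨ZMod.val_lt _, ?_, ?_⟩
    · have hcoe : (↑v * (x : ZMod q)) = ↑(v * ZMod.unitOfCoprime x hxcop) := by
        rw [Units.val_mul, ZMod.coe_unitOfCoprime]
      rw [hcoe]; exact ZMod.val_coe_unit_coprime _
    · rw [val_mod q m hmq, map_mul]
      have hx' : (ZMod.castHom hmq (ZMod m)) ((x : ℕ) : ZMod q) = (c₁ : ZMod m) := by
        rw [map_natCast, ← hxm, ZMod.natCast_mod]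
      rw [hx', hv, ZMod.val_natCast, Nat.mod_eq_of_lt h₂]
  set uc := ZMod.unitOfCoprime c hcop with huc
  set uc' := ZMod.unitOfCoprime c' hcop' with huc'
  obtain ⟨w, hw⟩ := ZMod.unitsMap_surjective hmq (uc' * uc⁻¹)
  have hcast : ∀ (v : (ZMod q)ˣ),
      (ZMod.castHom hmq (ZMod m)) ↑v = ((ZMod.unitsMap hmq v : (ZMod m)ˣ) : ZMod m) := by
    intro v; rw [ZMod.unitsMap_def]; rfl
  have hw1 : (ZMod.castHom hmq (ZMod m)) ↑w * (c : ZMod m) = (c' : ZMod m) := by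
    rw [hcast, hw, ← ZMod.coe_unitOfCoprime c hcop, ← huc, ← Units.val_mul,
      inv_mul_cancel_right, huc', ZMod.coe_unitOfCoprime]
  have hw2 : (ZMod.castHom hmq (ZMod m)) ↑(w⁻¹) * (c' : ZMod m) = (c : ZMod m) := by
    rw [hcast, map_inv, hw, ← ZMod.coe_unitOfCoprime c' hcop', ← huc', ← Units.val_mul]
    have hgrp : (uc' * uc⁻¹)⁻¹ * uc' = uc := by group
    rw [hgrp, huc, ZMod.coe_unitOfCoprime]
  refine Finset.card_bij' (fun x _ => ((↑w * (x : ZMod q)).val))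
    (fun y _ => ((↑(w⁻¹) * (y : ZMod q)).val)) (main w c c' hc' hw1) (main w⁻¹ c' c hc hw2)
    ?_ ?_
  · intro x hx
    simp only [mem_filter, mem_range] at hx
    rw [natCast_val_self, ← mul_assoc, ← Units.val_mul, inv_mul_cancel, Units.val_one,
      one_mul, ZMod.val_cast_of_lt hx.1]
  · intro y hy
    simp only [mem_filter, mem_range] at hy
    rw [natCast_val_self, ← mul_assoc, ← Units.val_mul, mul_inv_cancel, Units.val_one,
      one_mul, ZMod.val_cast_of_lt hy.1]

private lemma Tcard (q m : ℕ) (hq : 0 < q) (hm0 : 0 < m) (hmq : m ∣ q)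
    {c : ℕ} (hc : c < m) (hcop : Nat.Coprime c m) :
    ((Finset.range q).filter fun x => Nat.Coprime x q ∧ x % m = c).card
      = q.totient / m.totient := by
  have hmaps : ∀ x ∈ (range q).filter (fun x => Nat.Coprime x q),
      x % m ∈ (range m).filter (fun c => Nat.Coprime c m) := by
    intro x hx
    simp only [mem_filter, mem_range] at hx ⊢
    exact ⟨Nat.mod_lt _ hm0, cop_mod (hx.2.coprime_dvd_right hmq)⟩
  have hsum := Finset.card_eq_sum_card_fiberwise hmaps
  have htotq : q.totient = ((range q).filter (fun x => Nat.Coprime x q)).card := by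
    rw [Nat.totient_eq_card_coprime]
    congr 1
    apply Finset.filter_congr
    intro x _
    simp [Nat.coprime_comm]
  have htotm : m.totient = ((range m).filter (fun x => Nat.Coprime x m)).card := by
    rw [Nat.totient_eq_card_coprime]
    congr 1
    apply Finset.filter_congr
    intro x _
    simp [Nat.coprime_comm]
  have hconst : ∀ c' ∈ (range m).filter (fun x => Nat.Coprime x m),
      (((range q).filter (fun x => Nat.Coprime x q)).filter (fun x => x % m = c')).card
        = ((range q).filter fun x => Nat.Coprime x q ∧ x % m = c).card := by
    intro c' hc'
    simp only [mem_filter, mem_range] at hc'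
    rw [Finset.filter_filter]
    exact Tcard_eq q m hq hm0 hmq hc'.1 hc'.2 hc hcop
  rw [Finset.sum_congr rfl hconst, Finset.sum_const, smul_eq_mul, ← htotm] at hsum
  rw [← htotq] at hsum
  symm
  exact Nat.div_eq_of_eq_mul_left (Nat.totient_pos.mpr hm0) (by rw [hsum, mul_comm])

private lemma fiber_card_eq (q m : ℕ) (hq : 0 < q) (hm0 : 0 < m) (hmq : m ∣ q) (a : ℤ)
    (ha : Int.gcd a (q:ℤ) = 1) (c : ℕ×ℕ×ℕ)
    (hc : c ∈ ((Finset.range m) ×ˢ (Finset.range m) ×ˢ (Finset.range m)).filter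
      (fun b : ℕ×ℕ×ℕ => Nat.Coprime b.1 m ∧ Nat.Coprime b.2.1 m ∧ Nat.Coprime b.2.2 m ∧
        ((b.1*b.2.1*b.2.2 : ℕ) : ℤ) ≡ a [ZMOD (m:ℤ)])) :
    ((((Finset.range q) ×ˢ (Finset.range q) ×ˢ (Finset.range q)).filter
      (fun b : ℕ×ℕ×ℕ => Nat.Coprime b.1 q ∧ Nat.Coprime b.2.1 q ∧ Nat.Coprime b.2.2 q ∧
        ((b.1*b.2.1*b.2.2 : ℕ) : ℤ) ≡ a [ZMOD (q:ℤ)])).filter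
      (fun b : ℕ×ℕ×ℕ => (b.1 % m, b.2.1 % m, b.2.2 % m) = c)).card
    = (((Finset.range q).filter fun x => Nat.Coprime x q ∧ x % m = c.1) ×ˢ
       ((Finset.range q).filter fun x => Nat.Coprime x q ∧ x % m = c.2.1)).card := by
  haveI := NeZero.of_pos hq
  haveI := NeZero.of_pos hm0
  simp only [mem_filter, mem_product, mem_range] at hc
  obtain ⟨⟨hc1m, hc2m, hc3m⟩, hc1, hc2, hc3, hcmod⟩ := hc
  have hcz : ((c.1 : ZMod m) * c.2.1 * c.2.2) = (a : ZMod m) := by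
    have := (modeq_iff m _ a).mp hcmod
    push_cast at this
    exact this
  have hau : IsUnit (a : ZMod q) := isUnit_int_cast q a ha
  have hcu : IsUnit ((c.1 : ZMod m) * (c.2.1 : ZMod m)) :=
    ((ZMod.isUnit_iff_coprime _ _).mpr hc1).mul ((ZMod.isUnit_iff_coprime _ _).mpr hc2)
  refine Finset.card_bij' (fun b _ => (b.1, b.2.1))
    (fun y _ => (y.1, y.2, ((a : ZMod q) * ((y.1 : ZMod q) * (y.2 : ZMod q))⁻¹).val)) ?_ ?_ ?_ ?_
  · intro b hb
    simp only [mem_filter, mem_product, mem_range, Prod.ext_iff] at hb ⊢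
    obtain ⟨⟨⟨h1q, h2q, h3q⟩, hcop1, hcop2, hcop3, hmod⟩, hm1, hm2, hm3⟩ := hb
    exact ⟨⟨h1q, hcop1, hm1⟩, h2q, hcop2, hm2⟩
  · intro y hy
    simp only [mem_filter, mem_product, mem_range, Prod.ext_iff] at hy ⊢
    obtain ⟨⟨h1q, hcop1, hm1⟩, h2q, hcop2, hm2⟩ := hy
    have ht : IsUnit ((y.1 : ZMod q) * (y.2 : ZMod q)) :=
      ((ZMod.isUnit_iff_coprime _ _).mpr hcop1).mul ((ZMod.isUnit_iff_coprime _ _).mpr hcop2)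
    have htinv : IsUnit ((y.1 : ZMod q) * (y.2 : ZMod q))⁻¹ :=
      IsUnit.of_mul_eq_one _ (ZMod.inv_mul_of_unit _ ht)
    have hzu : IsUnit ((a : ZMod q) * ((y.1 : ZMod q) * (y.2 : ZMod q))⁻¹) := hau.mul htinv
    have hzcop : Nat.Coprime ((a : ZMod q) * ((y.1 : ZMod q) * (y.2 : ZMod q))⁻¹).val q := by
      have := ZMod.val_coe_unit_coprime hzu.unit
      rwa [hzu.unit_spec] at this
    have hcast : (ZMod.castHom hmq (ZMod m)) ((a : ZMod q) * ((y.1 : ZMod q) * (y.2 : ZMod q))⁻¹)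
        = ((c.2.2 : ℕ) : ZMod m) := by
      rw [map_mul, map_intCast, castHom_inv q m hmq _ ht, map_mul, map_natCast, map_natCast,
        ← ZMod.natCast_mod y.1 m, ← ZMod.natCast_mod y.2 m, hm1, hm2, ← hcz, mul_right_comm,
        ZMod.mul_inv_of_unit _ hcu, one_mul]
    have hzm : ((a : ZMod q) * ((y.1 : ZMod q) * (y.2 : ZMod q))⁻¹).val % m = c.2.2 := by
      rw [val_mod q m hmq, hcast, ZMod.val_cast_of_lt hc3m]
    refine ⟨⟨⟨h1q, h2q, ZMod.val_lt _⟩, hcop1, hcop2, hzcop, ?_⟩, hm1, hm2, hzm⟩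
    · rw [modeq_iff]
      push_cast
      rw [natCast_val_self, mul_comm ((a : ZMod q)), ← mul_assoc,
        ZMod.mul_inv_of_unit _ ht, one_mul]
  · intro b hb
    simp only [mem_filter, mem_product, mem_range, Prod.ext_iff] at hb
    obtain ⟨⟨⟨h1q, h2q, h3q⟩, hcop1, hcop2, hcop3, hmod⟩, hm1, hm2, hm3⟩ := hb
    have hbu : IsUnit ((b.1 : ZMod q) * (b.2.1 : ZMod q)) :=
      ((ZMod.isUnit_iff_coprime _ _).mpr hcop1).mul ((ZMod.isUnit_iff_coprime _ _).mpr hcop2)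
    have hb3 : ((a : ZMod q) * ((b.1 : ZMod q) * (b.2.1 : ZMod q))⁻¹).val = b.2.2 := by
      have hz : ((b.1 : ZMod q) * (b.2.1 : ZMod q) * (b.2.2 : ZMod q)) = (a : ZMod q) := by
        have := (modeq_iff q _ a).mp hmod
        push_cast at this
        exact this
      rw [← hz, mul_right_comm, ZMod.mul_inv_of_unit _ hbu, one_mul,
        ZMod.val_cast_of_lt h3q]
    dsimp only
    rw [hb3]
  · intro y hy
    dsimp only

/-- Gcd reduction for `F`: if `gcd(a, q) = 1` and `d = gcd(h₁, h₂, h₃, q)`,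
then `F(h₁,h₂,h₃;a;q) = (φ(q)²/φ(q/d)²) F(h₁/d, h₂/d, h₃/d; a; q/d)`. -/
theorem stmt_16 (q : ℕ) (hq : 0 < q) (h1 h2 h3 a : ℤ)
    (ha : Int.gcd a (q : ℤ) = 1)
    (d : ℕ) (hd : d = Nat.gcd (Int.gcd h1 ((Int.gcd h2 h3 : ℕ) : ℤ)) q) :
    F h1 h2 h3 a q =
      ((Nat.totient q : ℂ) ^ 2 / (Nat.totient (q / d) : ℂ) ^ 2) *
        F (h1 / (d : ℤ)) (h2 / (d : ℤ)) (h3 / (d : ℤ)) a (q / d) := by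
  have hdq : d ∣ q := by rw [hd]; exact Nat.gcd_dvd_right _ _
  have hd0 : 0 < d := Nat.pos_of_dvd_of_pos hdq hq
  set m := q / d with hmdef
  have hm0 : 0 < m := Nat.div_pos (Nat.le_of_dvd hq hdq) hd0
  have hqm : q = d * m := (Nat.mul_div_cancel' hdq).symm
  have hmq : m ∣ q := Nat.div_dvd_of_dvd hdq
  have hgd : (d:ℤ) ∣ ((Int.gcd h1 ((Int.gcd h2 h3 : ℕ) : ℤ) : ℕ) : ℤ) :=
    Int.natCast_dvd_natCast.mpr (hd ▸ Nat.gcd_dvd_left _ _)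
  have hd1 : (d:ℤ) ∣ h1 := hgd.trans (Int.gcd_dvd_left _ _)
  have hd23 : (d:ℤ) ∣ ((Int.gcd h2 h3 : ℕ) : ℤ) := hgd.trans (Int.gcd_dvd_right _ _)
  have hd2 : (d:ℤ) ∣ h2 := hd23.trans (Int.gcd_dvd_left _ _)
  have hd3 : (d:ℤ) ∣ h3 := hd23.trans (Int.gcd_dvd_right _ _)
  have e1 : (d:ℤ) * (h1 / d) = h1 := Int.mul_ediv_cancel' hd1
  have e2 : (d:ℤ) * (h2 / d) = h2 := Int.mul_ediv_cancel' hd2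
  have e3 : (d:ℤ) * (h3 / d) = h3 := Int.mul_ediv_cancel' hd3
  -- the reduced-level summand
  set E : ℕ×ℕ×ℕ → ℂ := fun c => Complex.exp (2 * Real.pi * Complex.I *
      (((h1/(d:ℤ) * c.1 + h2/(d:ℤ) * c.2.1 + h3/(d:ℤ) * c.2.2 : ℤ) : ℂ) / (m : ℂ))) with hE
  have expstep : ∀ b : ℕ×ℕ×ℕ,
      Complex.exp (2 * Real.pi * Complex.I *
        (((h1 * b.1 + h2 * b.2.1 + h3 * b.2.2 : ℤ) : ℂ) / (q : ℂ)))
      = E (b.1 % m, b.2.1 % m, b.2.2 % m) := by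
    intro b
    have hnum : (h1 * b.1 + h2 * b.2.1 + h3 * b.2.2 : ℤ)
        = d * (h1/(d:ℤ) * b.1 + h2/(d:ℤ) * b.2.1 + h3/(d:ℤ) * b.2.2) := by
      linear_combination (b.1:ℤ) * e1.symm + (b.2.1:ℤ) * e2.symm + (b.2.2:ℤ) * e3.symm
    have hdC : (d:ℂ) ≠ 0 := by exact_mod_cast hd0.ne'
    have hscale : (((h1 * b.1 + h2 * b.2.1 + h3 * b.2.2 : ℤ) : ℂ) / (q : ℂ))
        = (((h1/(d:ℤ) * b.1 + h2/(d:ℤ) * b.2.1 + h3/(d:ℤ) * b.2.2 : ℤ) : ℂ) / (m : ℂ)) := by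
      rw [hnum, hqm]
      push_cast
      rw [mul_div_mul_left _ _ hdC]
    rw [hscale, hE]
    apply exp_congr hm0
    exact ((((modred m b.1).mul_left (h1/(d:ℤ))).add
      ((modred m b.2.1).mul_left (h2/(d:ℤ)))).add
      ((modred m b.2.2).mul_left (h3/(d:ℤ)))).symm
  have hmaps : ∀ b ∈ ((Finset.range q) ×ˢ (Finset.range q) ×ˢ (Finset.range q)).filter
      (fun b : ℕ × ℕ × ℕ => Nat.Coprime b.1 q ∧ Nat.Coprime b.2.1 q ∧
        Nat.Coprime b.2.2 q ∧
        ((b.1 * b.2.1 * b.2.2 : ℕ) : ℤ) ≡ a [ZMOD (q : ℤ)]),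
      (b.1 % m, b.2.1 % m, b.2.2 % m) ∈
        ((Finset.range m) ×ˢ (Finset.range m) ×ˢ (Finset.range m)).filter
      (fun b : ℕ × ℕ × ℕ => Nat.Coprime b.1 m ∧ Nat.Coprime b.2.1 m ∧
        Nat.Coprime b.2.2 m ∧
        ((b.1 * b.2.1 * b.2.2 : ℕ) : ℤ) ≡ a [ZMOD (m : ℤ)]) := by
    intro b hb
    simp only [mem_filter, mem_product, mem_range] at hb ⊢
    obtain ⟨⟨h1q, h2q, h3q⟩, hcop1, hcop2, hcop3, hmod⟩ := hb
    refine ⟨⟨Nat.mod_lt _ hm0, Nat.mod_lt _ hm0, Nat.mod_lt _ hm0⟩,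
      cop_mod (hcop1.coprime_dvd_right hmq), cop_mod (hcop2.coprime_dvd_right hmq),
      cop_mod (hcop3.coprime_dvd_right hmq), ?_⟩
    have hmodm : ((b.1 * b.2.1 * b.2.2 : ℕ) : ℤ) ≡ a [ZMOD (m : ℤ)] :=
      Int.ModEq.of_dvd (Int.natCast_dvd_natCast.mpr hmq) hmod
    refine Int.ModEq.trans ?_ hmodm
    push_cast
    exact ((modred m b.1).mul (modred m b.2.1)).mul (modred m b.2.2)
  have hKdvd : m.totient ∣ q.totient := Nat.totient_dvd_of_dvd hmq
  have hKm : (m.totient : ℂ) ≠ 0 := by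
    exact_mod_cast (Nat.totient_pos.mpr hm0).ne'
  calc F h1 h2 h3 a q
      = ∑ b ∈ ((Finset.range q) ×ˢ (Finset.range q) ×ˢ (Finset.range q)).filter
          (fun b : ℕ × ℕ × ℕ => Nat.Coprime b.1 q ∧ Nat.Coprime b.2.1 q ∧
            Nat.Coprime b.2.2 q ∧
            ((b.1 * b.2.1 * b.2.2 : ℕ) : ℤ) ≡ a [ZMOD (q : ℤ)]),
          E (b.1 % m, b.2.1 % m, b.2.2 % m) :=
        Finset.sum_congr rfl (fun b _ => expstep b)
    _ = ∑ c ∈ ((Finset.range m) ×ˢ (Finset.range m) ×ˢ (Finset.range m)).filter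
          (fun b : ℕ × ℕ × ℕ => Nat.Coprime b.1 m ∧ Nat.Coprime b.2.1 m ∧
            Nat.Coprime b.2.2 m ∧
            ((b.1 * b.2.1 * b.2.2 : ℕ) : ℤ) ≡ a [ZMOD (m : ℤ)]),
        ∑ b ∈ (((Finset.range q) ×ˢ (Finset.range q) ×ˢ (Finset.range q)).filter
          (fun b : ℕ × ℕ × ℕ => Nat.Coprime b.1 q ∧ Nat.Coprime b.2.1 q ∧
            Nat.Coprime b.2.2 q ∧
            ((b.1 * b.2.1 * b.2.2 : ℕ) : ℤ) ≡ a [ZMOD (q : ℤ)])).filter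
            (fun b : ℕ×ℕ×ℕ => (b.1 % m, b.2.1 % m, b.2.2 % m) = c),
          E (b.1 % m, b.2.1 % m, b.2.2 % m) :=
        (Finset.sum_fiberwise_of_maps_to hmaps _).symm
    _ = ∑ c ∈ ((Finset.range m) ×ˢ (Finset.range m) ×ˢ (Finset.range m)).filter
          (fun b : ℕ × ℕ × ℕ => Nat.Coprime b.1 m ∧ Nat.Coprime b.2.1 m ∧
            Nat.Coprime b.2.2 m ∧
            ((b.1 * b.2.1 * b.2.2 : ℕ) : ℤ) ≡ a [ZMOD (m : ℤ)]),
        ((q.totient / m.totient) * (q.totient / m.totient) : ℕ) • E c := by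
        refine Finset.sum_congr rfl fun c hc => ?_
        have hcard := fiber_card_eq q m hq hm0 hmq a ha c hc
        rw [Finset.card_product] at hcard
        simp only [mem_filter, mem_product, mem_range] at hc
        obtain ⟨⟨hc1m, hc2m, hc3m⟩, hc1, hc2, hc3, hcmod⟩ := hc
        rw [Tcard q m hq hm0 hmq hc1m hc1, Tcard q m hq hm0 hmq hc2m hc2] at hcard
        rw [← hcard, ← Finset.sum_const]
        refine Finset.sum_congr rfl fun b hb => ?_
        rw [(Finset.mem_filter.mp hb).2]
    _ = ((Nat.totient q : ℂ) ^ 2 / (Nat.totient m : ℂ) ^ 2) *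
        F (h1 / (d : ℤ)) (h2 / (d : ℤ)) (h3 / (d : ℤ)) a m := by
        rw [show F (h1 / (d : ℤ)) (h2 / (d : ℤ)) (h3 / (d : ℤ)) a m
          = ∑ c ∈ ((Finset.range m) ×ˢ (Finset.range m) ×ˢ (Finset.range m)).filter
          (fun b : ℕ × ℕ × ℕ => Nat.Coprime b.1 m ∧ Nat.Coprime b.2.1 m ∧
            Nat.Coprime b.2.2 m ∧
            ((b.1 * b.2.1 * b.2.2 : ℕ) : ℤ) ≡ a [ZMOD (m : ℤ)]), E c from rfl]
        rw [Finset.mul_sum]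
        refine Finset.sum_congr rfl fun c _ => ?_
        rw [nsmul_eq_mul]
        congr 1
        push_cast [Nat.cast_div hKdvd hKm]
        ring
end
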